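/- arXiv:1409.7191 — 3 statements merged into one kernel-verified Lean document; each statement's English description precedes it below -/
import Mathlib

section
/- Let $N\ge 2$, $p>0$, $q\in[0,2)$ with $p+q>1$, and set $\beta_1=(2-q)/(p+q-1)$. If $N(p+q-1)<p+1$ then $\beta_1+2-N>0$, so the constant $\Lambda_1^\dagger=((\beta_1+2-N)/\beta_1^{q-1})^{1/(p+q-1)}$ is well defined and positive, and the radial function $U(x)=\Lambda_1^\dagger |x|^{-\beta_1}$ satisfies $-\Delta U + U^p|\nabla U|^q = 0$ on $\mathbb{R}^N\setminus\{0\}$. -/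
/-- The (flat) Laplacian of a function on `ℝ^N`, as a sum of second partial derivatives. -/
noncomputable def lap {N : ℕ} (f : EuclideanSpace ℝ (Fin N) → ℝ)
    (x : EuclideanSpace ℝ (Fin N)) : ℝ :=
  ∑ i : Fin N, fderiv ℝ (fun y => fderiv ℝ f y (EuclideanSpace.single i 1)) x
    (EuclideanSpace.single i 1)

/-!
For `U = Λ |x|^{-β}` both terms of the equation are multiples of `|x|^{-β-2}`: the Laplacian is
`-Λ β (β + 2 - N) |x|^{-β-2}`, and `U^p |∇U|^q = Λ^{p+q} β^q |x|^{-βp-(β+1)q}`, where the choice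
`β(p+q-1) = 2-q` makes the exponents agree. The constant `Λ` is then chosen so that
`Λ^{p+q-1} β^{q-1} = β + 2 - N`, which makes the coefficients cancel; the subcriticality
`N(p+q-1) < p+1` is exactly what makes `β + 2 - N` positive.
-/

open Real

section NormRpow

variable {E : Type*} [NormedAddCommGroup E] [InnerProductSpace ℝ E]

theorem hasFDerivAt_norm_rpow_of_ne_zero {x : E} (hx : x ≠ 0) (c : ℝ) :
    HasFDerivAt (fun y : E => ‖y‖ ^ c) ((c * ‖x‖ ^ (c - 2)) • innerSL ℝ x) x := by
  have hx' : 0 < ‖x‖ := norm_pos_iff.mpr hx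
  have hsq := ((hasStrictFDerivAt_norm_sq x).hasFDerivAt).rpow_const (p := c / 2)
    (Or.inl (by positivity))
  have hpow : ∀ y : E, (‖y‖ ^ 2) ^ (c / 2) = ‖y‖ ^ c := fun y => by
    rw [← rpow_natCast, ← rpow_mul (norm_nonneg y)]
    ring_nf
  have hpow' : (‖x‖ ^ 2) ^ (c / 2 - 1) = ‖x‖ ^ (c - 2) := by
    rw [← rpow_natCast, ← rpow_mul hx'.le]
    ring_nf
  simp only [hpow, hpow'] at hsq
  refine hsq.congr_fderiv ?_
  ext y
  simp only [smul_apply, coe_innerSL_apply, nsmul_eq_mul, Nat.cast_ofNat, smul_eq_mul]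
  ring

theorem hasFDerivAt_const_mul_norm_rpow {x : E} (hx : x ≠ 0) (a c : ℝ) :
    HasFDerivAt (fun y : E => a * ‖y‖ ^ c) ((a * c * ‖x‖ ^ (c - 2)) • innerSL ℝ x) x := by
  refine ((hasFDerivAt_norm_rpow_of_ne_zero hx c).const_mul a).congr_fderiv ?_
  rw [smul_smul, mul_assoc]

theorem norm_fderiv_const_mul_norm_rpow {x : E} (hx : x ≠ 0) (a c : ℝ) :
    ‖fderiv ℝ (fun y : E => a * ‖y‖ ^ c) x‖ = |a * c| * ‖x‖ ^ (c - 1) := by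
  have hx' : 0 < ‖x‖ := norm_pos_iff.mpr hx
  rw [(hasFDerivAt_const_mul_norm_rpow hx a c).fderiv, norm_smul, innerSL_apply_norm,
    norm_mul, norm_eq_abs, norm_of_nonneg (rpow_nonneg hx'.le _), mul_assoc,
    ← rpow_add_one hx'.ne']
  ring_nf

end NormRpow

section Laplacian

variable {N : ℕ}

theorem fderiv_const_mul_norm_rpow_single {x : EuclideanSpace ℝ (Fin N)} (hx : x ≠ 0)
    (a c : ℝ) (i : Fin N) :
    fderiv ℝ (fun y : EuclideanSpace ℝ (Fin N) => a * ‖y‖ ^ c) x (EuclideanSpace.single i 1)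
      = a * c * ‖x‖ ^ (c - 2) * x i := by
  simp [(hasFDerivAt_const_mul_norm_rpow hx a c).fderiv, EuclideanSpace.inner_single_right]

theorem second_partial_const_mul_norm_rpow {x : EuclideanSpace ℝ (Fin N)} (hx : x ≠ 0)
    (a c : ℝ) (i : Fin N) :
    fderiv ℝ (fun y => fderiv ℝ (fun z : EuclideanSpace ℝ (Fin N) => a * ‖z‖ ^ c) y
        (EuclideanSpace.single i 1)) x (EuclideanSpace.single i 1)
      = a * c * ((c - 2) * ‖x‖ ^ (c - 4) * x i ^ 2 + ‖x‖ ^ (c - 2)) := by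
  have hpartial : (fun y => fderiv ℝ (fun z : EuclideanSpace ℝ (Fin N) => a * ‖z‖ ^ c) y
      (EuclideanSpace.single i 1)) =ᶠ[nhds x] fun y => a * c * ‖y‖ ^ (c - 2) * y i :=
    (eventually_ne_nhds hx).mono fun y hy => fderiv_const_mul_norm_rpow_single hy a c i
  have hderiv : HasFDerivAt (fun y : EuclideanSpace ℝ (Fin N) => a * c * ‖y‖ ^ (c - 2) * y i)
      _ x :=
    (hasFDerivAt_const_mul_norm_rpow hx (a * c) (c - 2)).mul
      (EuclideanSpace.proj (𝕜 := ℝ) i).hasFDerivAt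
  rw [hpartial.fderiv_eq, hderiv.fderiv]
  simp only [show c - 2 - 2 = c - 4 by ring, add_apply, smul_apply, PiLp.proj_apply,
    PiLp.single_eq_same, smul_eq_mul, mul_one, coe_innerSL_apply,
    EuclideanSpace.inner_single_right, ringHom_apply, one_mul]
  ring

theorem lap_const_mul_norm_rpow {x : EuclideanSpace ℝ (Fin N)} (hx : x ≠ 0) (a c : ℝ) :
    lap (fun y => a * ‖y‖ ^ c) x = a * c * (c + N - 2) * ‖x‖ ^ (c - 2) := by
  have hx' : 0 < ‖x‖ := norm_pos_iff.mpr hx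
  have hsum : ∑ i : Fin N, x i ^ 2 = ‖x‖ ^ (2 : ℕ) := by
    rw [EuclideanSpace.norm_eq, sq_sqrt (by positivity)]
    simp [sq_abs]
  have hpow : ‖x‖ ^ (c - 4) * ‖x‖ ^ (2 : ℕ) = ‖x‖ ^ (c - 2) := by
    rw [← rpow_natCast, ← rpow_add hx']
    ring_nf
  simp only [lap, second_partial_const_mul_norm_rpow hx, mul_add, Finset.sum_add_distrib,
    ← Finset.mul_sum, ← mul_assoc]
  rw [Finset.sum_const, Finset.card_univ, Fintype.card_fin, nsmul_eq_mul, hsum]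
  linear_combination a * c * (c - 2) * hpow

end Laplacian

theorem rpow_mul_rpow_of_power_profile {r Λ β p q : ℝ} (hr : 0 < r) (hΛ : 0 < Λ) (hβ : 0 < β) :
    (Λ * r ^ (-β)) ^ p * (Λ * β * r ^ (-β - 1)) ^ q
      = Λ ^ (p + q - 1) * β ^ (q - 1) * (Λ * β) * r ^ (-β * p - (β + 1) * q) := by
  rw [mul_rpow hΛ.le (rpow_nonneg hr.le _), mul_rpow (by positivity) (rpow_nonneg hr.le _),
    mul_rpow hΛ.le hβ.le, ← rpow_mul hr.le, ← rpow_mul hr.le, rpow_sub_one hΛ.ne',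
    rpow_sub_one hβ.ne', rpow_add hΛ, show -β * p - (β + 1) * q = -β * p + (-β - 1) * q by ring,
    rpow_add hr]
  field_simp

theorem stmt0_general (N : ℕ) (p q : ℝ) (hq2 : q < 2)
    (hpq : 1 < p + q) (β Λ : ℝ)
    (hβ : β = (2 - q) / (p + q - 1))
    (hΛ : Λ = ((β + 2 - N) / β ^ (q - 1)) ^ (1 / (p + q - 1)))
    (hsub : (N : ℝ) * (p + q - 1) < p + 1) :
    0 < β + 2 - N ∧ 0 < Λ ∧
      ∀ x : EuclideanSpace ℝ (Fin N), x ≠ 0 →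
        -lap (fun y => Λ * ‖y‖ ^ (-β)) x
            + (Λ * ‖x‖ ^ (-β)) ^ p
              * ‖fderiv ℝ (fun y => Λ * ‖y‖ ^ (-β)) x‖ ^ q = 0 := by
  have hpq1 : 0 < p + q - 1 := by linarith
  have hβq : β * (p + q - 1) = 2 - q := by rw [hβ]; field_simp
  have hβpos : 0 < β := by rw [hβ]; exact div_pos (by linarith) hpq1
  have hgap : 0 < β + 2 - N := by
    have hsplit : (β + 2 - N) * (p + q - 1) = (p + 1 - N * (p + q - 1)) + (p + q - 1) := by
      linear_combination hβq
    exact pos_of_mul_pos_left (by linarith) hpq1.le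
  have hA : 0 < (β + 2 - N) / β ^ (q - 1) := div_pos hgap (rpow_pos_of_pos hβpos _)
  have hΛpos : 0 < Λ := hΛ ▸ rpow_pos_of_pos hA _
  refine ⟨hgap, hΛpos, fun x hx => ?_⟩
  have hΛpow : Λ ^ (p + q - 1) * β ^ (q - 1) = β + 2 - N := by
    rw [hΛ, ← rpow_mul hA.le, one_div, inv_mul_cancel₀ hpq1.ne', rpow_one,
      div_mul_cancel₀ _ (rpow_pos_of_pos hβpos _).ne']
  rw [lap_const_mul_norm_rpow hx, norm_fderiv_const_mul_norm_rpow hx,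
    show |Λ * -β| = Λ * β by rw [abs_mul, abs_neg, abs_of_pos hΛpos, abs_of_pos hβpos],
    rpow_mul_rpow_of_power_profile (norm_pos_iff.mpr hx) hΛpos hβpos, hΛpow,
    show -β * p - (β + 1) * q = -β - 2 by linarith]
  ring

/-- if `N(p+q-1) < p+1` then `β₁+2-N > 0`, the constant `Λ₁†` is positive,
and `U(x) = Λ₁† |x|^{-β₁}` solves `-ΔU + U^p |∇U|^q = 0` on `ℝ^N \ {0}`. -/
theorem stmt0 (N : ℕ) (hN : 2 ≤ N) (p q : ℝ) (hp : 0 < p) (hq0 : 0 ≤ q) (hq2 : q < 2)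
    (hpq : 1 < p + q) (β Λ : ℝ)
    (hβ : β = (2 - q) / (p + q - 1))
    (hΛ : Λ = ((β + 2 - N) / β ^ (q - 1)) ^ (1 / (p + q - 1)))
    (hsub : (N : ℝ) * (p + q - 1) < p + 1) :
    0 < β + 2 - N ∧ 0 < Λ ∧
      ∀ x : EuclideanSpace ℝ (Fin N), x ≠ 0 →
        -lap (fun y => Λ * ‖y‖ ^ (-β)) x
            + (Λ * ‖x‖ ^ (-β)) ^ p
              * ‖fderiv ℝ (fun y => Λ * ‖y‖ ^ (-β)) x‖ ^ q = 0 :=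
  stmt0_general N p q hq2 hpq β Λ hβ hΛ hsub
end

section
/- Let $N\ge 2$, $p>0$, $q\in[0,2)$ with $p+q>1$, and set $\beta_1=(2-q)/(p+q-1)$ and $\Lambda_1=((\beta_1+2)/\beta_1^{q-1})^{1/(p+q-1)}$. Then for any $\delta\ge 0$, the function $w(x)=\Lambda_1(|x|-\delta)^{-\beta_1}$ satisfies $-\Delta w + w^p|\nabla w|^q \ge 0$ on $\{x\in\mathbb{R}^N : |x|>\delta\}$. -/
open Filter Topology RealInnerProductSpace

section Radial

variable {E : Type*} [NormedAddCommGroup E] [InnerProductSpace ℝ E]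

theorem hasFDerivAt_norm_of_ne_zero {x : E} (hx : x ≠ 0) :
    HasFDerivAt (‖·‖) (‖x‖⁻¹ • innerSL ℝ x) x := by
  have hsq : HasDerivAt Real.sqrt (1 / (2 * ‖x‖)) (‖x‖ ^ 2) := by
    simpa [Real.sqrt_sq (norm_nonneg x)] using
      Real.hasDerivAt_sqrt (pow_ne_zero 2 (norm_ne_zero_iff.2 hx))
  have h := hsq.comp_hasFDerivAt x (hasStrictFDerivAt_norm_sq x).hasFDerivAt
  have hfun : (Real.sqrt ∘ fun y : E => ‖y‖ ^ 2) = (‖·‖) :=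
    funext fun y => Real.sqrt_sq (norm_nonneg y)
  rw [hfun] at h
  refine h.congr_fderiv ?_
  ext v
  simp only [one_div, mul_inv_rev, smul_apply, coe_innerSL_apply, nsmul_eq_mul, Nat.cast_ofNat,
    smul_eq_mul]
  ring

theorem HasDerivAt.comp_norm {f : ℝ → ℝ} {f' : ℝ} {x : E} (hx : x ≠ 0)
    (hf : HasDerivAt f f' ‖x‖) :
    HasFDerivAt (fun y => f ‖y‖) ((f' / ‖x‖) • innerSL ℝ x) x := by
  refine (hf.comp_hasFDerivAt x (hasFDerivAt_norm_of_ne_zero hx)).congr_fderiv ?_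
  rw [smul_smul, div_eq_mul_inv]

theorem HasDerivAt.norm_fderiv_comp_norm {f : ℝ → ℝ} {f' : ℝ} {x : E} (hx : x ≠ 0)
    (hf : HasDerivAt f f' ‖x‖) :
    ‖fderiv ℝ (fun y => f ‖y‖) x‖ = |f'| := by
  rw [(hf.comp_norm hx).fderiv, norm_smul, innerSL_apply_norm, Real.norm_eq_abs, abs_div,
    abs_norm, div_mul_cancel₀ _ (norm_ne_zero_iff.2 hx)]

end Radial

theorem lap_comp_norm {N : ℕ} {f f' : ℝ → ℝ} {f'' : ℝ} {x : EuclideanSpace ℝ (Fin N)}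
    (hx : x ≠ 0) (hf : ∀ᶠ r in 𝓝 ‖x‖, HasDerivAt f (f' r) r) (hf' : HasDerivAt f' f'' ‖x‖) :
    lap (fun y => f ‖y‖) x = f'' + (N - 1) / ‖x‖ * f' ‖x‖ := by
  have hr : ‖x‖ ≠ 0 := norm_ne_zero_iff.2 hx
  set g : ℝ → ℝ := fun r => f' r / r
  have hg : HasDerivAt g ((f'' * ‖x‖ - f' ‖x‖ * 1) / ‖x‖ ^ 2) ‖x‖ :=
    hf'.div (hasDerivAt_id _) hr
  have hpartial : ∀ i, (fun y => fderiv ℝ (fun z : EuclideanSpace ℝ (Fin N) => f ‖z‖) y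
      (EuclideanSpace.single i 1)) =ᶠ[𝓝 x] fun y => g ‖y‖ * y i := by
    intro i
    have hne : ∀ᶠ y in 𝓝 x, y ≠ 0 := isOpen_ne.mem_nhds hx
    filter_upwards [hne, continuous_norm.continuousAt.eventually hf] with y hy hfy
    rw [(hfy.comp_norm hy).fderiv]
    simp [g, EuclideanSpace.inner_single_right]
  have hterm : ∀ i, fderiv ℝ (fun y => fderiv ℝ (fun z : EuclideanSpace ℝ (Fin N) => f ‖z‖) y
      (EuclideanSpace.single i 1)) x (EuclideanSpace.single i 1)
      = g ‖x‖ + (f'' * ‖x‖ - f' ‖x‖) / ‖x‖ ^ 3 * (x i * x i) := by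
    intro i
    have hprod : HasFDerivAt (fun y : EuclideanSpace ℝ (Fin N) => g ‖y‖ * y i) _ x :=
      (hg.comp_norm hx).mul (EuclideanSpace.proj i : _ →L[ℝ] ℝ).hasFDerivAt
    rw [(hpartial i).fderiv_eq, hprod.fderiv]
    simp only [mul_one, add_apply, smul_apply, PiLp.proj_apply, PiLp.single_eq_same, smul_eq_mul,
      coe_innerSL_apply, EuclideanSpace.inner_single_right, Real.ringHom_apply, one_mul,
      add_right_inj]
    field_simp
  have hsum : ∑ i, x i * x i = ‖x‖ ^ 2 := by
    rw [EuclideanSpace.norm_eq, Real.sq_sqrt (by positivity)]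
    simp [sq]
  unfold lap
  rw [Finset.sum_congr rfl fun i _ => hterm i, Finset.sum_add_distrib, Finset.sum_const,
    ← Finset.mul_sum, hsum, Finset.card_univ, Fintype.card_fin, nsmul_eq_mul]
  simp only [g]
  field_simp
  ring

theorem hasDerivAt_mul_sub_rpow (c a δ : ℝ) {r : ℝ} (hr : δ < r) :
    HasDerivAt (fun s => c * (s - δ) ^ a) (c * a * (r - δ) ^ (a - 1)) r := by
  have h := (((hasDerivAt_id r).sub_const δ).rpow_const (p := a)
    (Or.inl (sub_pos.2 hr).ne')).const_mul c
  simpa [mul_assoc] using h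

theorem profile_rpow_mul_deriv_rpow_eq {p q β Λ t : ℝ} (hβ : 0 < β) (hΛ : 0 < Λ) (ht : 0 < t)
    (hβe : β * (p + q - 1) = 2 - q) (hΛe : Λ ^ (p + q - 1) = (β + 2) / β ^ (q - 1)) :
    (Λ * t ^ (-β)) ^ p * (Λ * β * t ^ (-β - 1)) ^ q = Λ * β * (β + 2) * t ^ (-β - 2) := by
  have hΛpq : Λ ^ (p + q) = Λ * ((β + 2) / β ^ (q - 1)) := by
    rw [show p + q = 1 + (p + q - 1) by ring, Real.rpow_add hΛ, Real.rpow_one, hΛe]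
  have hβq : β ^ q = β * β ^ (q - 1) := by
    rw [show q = 1 + (q - 1) by ring, Real.rpow_add hβ, Real.rpow_one, add_sub_cancel_left]
  have ht_exp : (t ^ (-β)) ^ p * (t ^ (-β - 1)) ^ q = t ^ (-β - 2) := by
    rw [← Real.rpow_mul ht.le, ← Real.rpow_mul ht.le, ← Real.rpow_add ht]
    congr 1
    linear_combination -hβe
  calc (Λ * t ^ (-β)) ^ p * (Λ * β * t ^ (-β - 1)) ^ q
      = Λ ^ (p + q) * β ^ q * ((t ^ (-β)) ^ p * (t ^ (-β - 1)) ^ q) := by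
        rw [Real.mul_rpow hΛ.le (by positivity), Real.mul_rpow (by positivity) (by positivity),
          Real.mul_rpow hΛ.le hβ.le, Real.rpow_add hΛ]
        ring
    _ = Λ * β * (β + 2) * t ^ (-β - 2) := by
        have : 0 < β ^ (q - 1) := by positivity
        rw [hΛpq, hβq, ht_exp]
        field_simp

theorem stmt1_general (N : ℕ) (hN : 2 ≤ N) (p q : ℝ) (hq2 : q < 2)
    (hpq : 1 < p + q) (β Λ : ℝ)
    (hβ : β = (2 - q) / (p + q - 1))
    (hΛ : Λ = ((β + 2) / β ^ (q - 1)) ^ (1 / (p + q - 1)))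
    (δ : ℝ) (hδ : 0 ≤ δ) :
    ∀ x : EuclideanSpace ℝ (Fin N), δ < ‖x‖ →
      0 ≤ -lap (fun y => Λ * (‖y‖ - δ) ^ (-β)) x
            + (Λ * (‖x‖ - δ) ^ (-β)) ^ p
              * ‖fderiv ℝ (fun y => Λ * (‖y‖ - δ) ^ (-β)) x‖ ^ q := by
  intro x hx
  have hpq1 : 0 < p + q - 1 := by linarith
  have hβ0 : 0 < β := hβ ▸ div_pos (by linarith) hpq1
  have hβe : β * (p + q - 1) = 2 - q := by rw [hβ]; field_simp
  have hbase : 0 < (β + 2) / β ^ (q - 1) := by positivity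
  have hΛ0 : 0 < Λ := hΛ ▸ Real.rpow_pos_of_pos hbase _
  have hΛe : Λ ^ (p + q - 1) = (β + 2) / β ^ (q - 1) := by
    rw [hΛ, ← Real.rpow_mul hbase.le, one_div_mul_cancel hpq1.ne', Real.rpow_one]
  have hr : 0 < ‖x‖ := hδ.trans_lt hx
  have ht : 0 < ‖x‖ - δ := sub_pos.2 hx
  have hf : ∀ᶠ r in 𝓝 ‖x‖, HasDerivAt (fun s => Λ * (s - δ) ^ (-β))
      (Λ * -β * (r - δ) ^ (-β - 1)) r :=
    (lt_mem_nhds hx).mono fun r hδr => hasDerivAt_mul_sub_rpow Λ (-β) δ hδr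
  have hx0 : x ≠ 0 := norm_pos_iff.1 hr
  rw [lap_comp_norm hx0 hf (hasDerivAt_mul_sub_rpow (Λ * -β) (-β - 1) δ hx),
    hf.self_of_nhds.norm_fderiv_comp_norm hx0,
    show |Λ * -β * (‖x‖ - δ) ^ (-β - 1)| = Λ * β * (‖x‖ - δ) ^ (-β - 1) by
      rw [mul_neg, neg_mul, abs_neg, abs_of_pos (by positivity)],
    profile_rpow_mul_deriv_rpow_eq hβ0 hΛ0 ht hβe hΛe, show -β - 1 - 1 = -β - 2 by ring]
  have hN1 : 0 ≤ ((N : ℝ) - 1) / ‖x‖ :=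
    div_nonneg (sub_nonneg.2 (by exact_mod_cast one_le_two.trans hN)) hr.le
  set t := ‖x‖ - δ
  have hA : 0 < Λ * β * t ^ (-β - 1) := by positivity
  have hB : 0 < Λ * β * t ^ (-β - 2) := by positivity
  linear_combination hB + mul_nonneg hN1 hA.le

/-- `w(x) = Λ₁ (|x|-δ)^{-β₁}` is a supersolution of
`-Δw + w^p |∇w|^q = 0` on `{|x| > δ}`. -/
theorem stmt1 (N : ℕ) (hN : 2 ≤ N) (p q : ℝ) (hp : 0 < p) (hq0 : 0 ≤ q) (hq2 : q < 2)
    (hpq : 1 < p + q) (β Λ : ℝ)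
    (hβ : β = (2 - q) / (p + q - 1))
    (hΛ : Λ = ((β + 2) / β ^ (q - 1)) ^ (1 / (p + q - 1)))
    (δ : ℝ) (hδ : 0 ≤ δ) :
    ∀ x : EuclideanSpace ℝ (Fin N), δ < ‖x‖ →
      0 ≤ -lap (fun y => Λ * (‖y‖ - δ) ^ (-β)) x
            + (Λ * (‖x‖ - δ) ^ (-β)) ^ p
              * ‖fderiv ℝ (fun y => Λ * (‖y‖ - δ) ^ (-β)) x‖ ^ q :=
  stmt1_general N hN p q hq2 hpq β Λ hβ hΛ δ hδ
end

section
/- Let $N\ge 2$ and let $S^{N-1}_+=\{\sigma\in S^{N-1}:\sigma_N>0\}$ with first Dirichlet eigenfunction $\varphi_1(\sigma)=\sigma_N$ (eigenvalue $N-1$, normalized with $\max\varphi_1=1$). Let $\beta_1>0$ satisfy $\beta_1(\beta_1+2-N)>N-1$, and let $1<\theta_2<\frac{\beta_1(\beta_1+2-N)}{N-1}$. Then for all sufficiently small $\theta_1>0$, the function $\underline\omega=\theta_1\varphi_1^{\theta_2}$ satisfies $-\Delta'\underline\omega + \underline\omega^p(\beta_1^2\underline\omega^2+|\nabla'\underline\omega|^2)^{q/2}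 - \beta_1(\beta_1+2-N)\underline\omega \le 0$ on $S^{N-1}_+$, where $p>0$, $q\in[0,2)$, $p+q>1$ and $\beta_1=(2-q)/(p+q-1)$. -/
set_option maxHeartbeats 1000000 in
/-- `ω = θ₁ φ₁^{θ₂}` is a subsolution of the hemisphere problem for small
`θ₁ > 0`. Since Mathlib lacks the Laplace–Beltrami operator, we use the explicit
identities `Δ'φ₁ = -(N-1)φ₁` and `|∇'φ₁|² = 1 - φ₁²` (with `φ₁(σ) = σ_N`, taking the
value `t ∈ (0,1]` on the open hemisphere), so that
`Δ'ω = θ₁(θ₂ t^{θ₂-1}·(-(N-1)t) + θ₂(θ₂-1) t^{θ₂-2}(1-t²))` and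
`|∇'ω|² = θ₁²θ₂² t^{2θ₂-2}(1-t²)`; the claimed differential inequality
`-Δ'ω + ω^p(β₁²ω² + |∇'ω|²)^{q/2} - β₁(β₁+2-N)ω ≤ 0` becomes a pointwise inequality in
`t`. -/
theorem stmt14 (N : ℕ) (hN : 2 ≤ N) (p q : ℝ) (hp : 0 < p) (hq0 : 0 ≤ q) (hq2 : q < 2)
    (hpq : 1 < p + q) (β : ℝ) (hβ : β = (2 - q) / (p + q - 1))
    (hsuper : (N : ℝ) - 1 < β * (β + 2 - N))
    (θ2 : ℝ) (hθ2 : 1 < θ2) (hθ2' : θ2 < β * (β + 2 - N) / ((N : ℝ) - 1)) :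
    ∃ θ0 : ℝ, 0 < θ0 ∧ ∀ θ1 : ℝ, 0 < θ1 → θ1 ≤ θ0 → ∀ t : ℝ, 0 < t → t ≤ 1 →
      -(θ1 * (θ2 * t ^ (θ2 - 1) * (-(((N : ℝ) - 1)) * t)
            + θ2 * (θ2 - 1) * t ^ (θ2 - 2) * (1 - t ^ 2)))
        + (θ1 * t ^ θ2) ^ p
          * (β ^ 2 * (θ1 * t ^ θ2) ^ 2
              + θ1 ^ 2 * θ2 ^ 2 * t ^ (2 * θ2 - 2) * (1 - t ^ 2)) ^ (q / 2)
        - β * (β + 2 - N) * (θ1 * t ^ θ2) ≤ 0 := by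
  have hpq1 : 0 < p + q - 1 := by linarith
  have hβpos : 0 < β := by
    rw [hβ]; exact div_pos (by linarith) hpq1
  set lam := β * (β + 2 - N) with hlam
  have hA : (1:ℝ) ≤ (N:ℝ) - 1 := by
    have : (2:ℝ) ≤ (N:ℝ) := by exact_mod_cast hN
    linarith
  have hApos : (0:ℝ) < (N:ℝ) - 1 := by linarith
  have hθ2lam : ((N:ℝ)-1) * θ2 < lam := by
    have := (lt_div_iff₀ hApos).mp hθ2'
    linarith
  set c := min (lam - ((N:ℝ)-1)*θ2) (θ2*(θ2-1)) with hcdef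
  have hcpos : 0 < c := lt_min (by linarith) (by nlinarith)
  have hc1 : c ≤ lam - ((N:ℝ)-1)*θ2 := min_le_left _ _
  have hc2 : c ≤ θ2*(θ2-1) := min_le_right _ _
  set K := max (β^2) (θ2^2) with hKdef
  have hKpos : 0 < K := lt_of_lt_of_le (by positivity) (le_max_right _ _)
  set Kq := K ^ (q/2) with hKqdef
  have hKqpos : 0 < Kq := Real.rpow_pos_of_pos hKpos _
  refine ⟨min 1 ((c/Kq) ^ (1/(p+q-1))),
    lt_min one_pos (Real.rpow_pos_of_pos (div_pos hcpos hKqpos) _), ?_⟩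
  intro θ1 hθ1 hθ1' t ht ht1
  have hX : 0 < t ^ θ2 := Real.rpow_pos_of_pos ht _
  have hY : 0 < t ^ (θ2 - 2) := Real.rpow_pos_of_pos ht _
  have hT : 0 < t ^ (2*θ2 - 2) := Real.rpow_pos_of_pos ht _
  have h1t : 0 ≤ 1 - t^2 := by nlinarith
  have e1 : t ^ (θ2-1) * t = t ^ θ2 := by
    rw [← Real.rpow_add_one ht.ne']; norm_num
  have e2 : t ^ (θ2-2) * t^2 = t ^ θ2 := by
    rw [← Real.rpow_natCast t 2, ← Real.rpow_add ht]; norm_num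
  have e3 : t ^ (2*θ2-2) * t^2 = t^θ2 * t^θ2 := by
    rw [← Real.rpow_natCast t 2, ← Real.rpow_add ht, ← Real.rpow_add ht]
    congr 1; ring
  -- bound on the inner expression
  have hI : β^2 * (θ1*t^θ2)^2 + θ1^2*θ2^2*t^(2*θ2-2)*(1-t^2)
      ≤ θ1^2 * t^(2*θ2-2) * K := by
    have h1 : β^2 ≤ K := le_max_left _ _
    have h2 : θ2^2 ≤ K := le_max_right _ _
    have e3' : (θ1*t^θ2)^2 = θ1^2 * (t^(2*θ2-2)*t^2) := by rw [e3]; ring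
    nlinarith [mul_nonneg (mul_nonneg (mul_nonneg (sq_nonneg θ1) hT.le) (sq_nonneg t))
        (sub_nonneg.mpr h1),
      mul_nonneg (mul_nonneg (mul_nonneg (sq_nonneg θ1) hT.le) h1t) (sub_nonneg.mpr h2), e3']
  have hInonneg : 0 ≤ β^2 * (θ1*t^θ2)^2 + θ1^2*θ2^2*t^(2*θ2-2)*(1-t^2) := by
    have : 0 ≤ θ1^2*θ2^2*t^(2*θ2-2)*(1-t^2) := by
      apply mul_nonneg _ h1t; positivity
    positivity
  have hIq : (β^2 * (θ1*t^θ2)^2 + θ1^2*θ2^2*t^(2*θ2-2)*(1-t^2)) ^ (q/2)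
      ≤ (θ1^2 * t^(2*θ2-2) * K) ^ (q/2) :=
    Real.rpow_le_rpow hInonneg hI (by positivity)
  have e4 : (θ1^2 * t^(2*θ2-2) * K) ^ (q/2) = θ1^q * t^((θ2-1)*q) * Kq := by
    rw [Real.mul_rpow (by positivity) hKpos.le, Real.mul_rpow (by positivity) hT.le,
      ← Real.rpow_natCast θ1 2, ← Real.rpow_mul hθ1.le, ← Real.rpow_mul ht.le,
      show ((2:ℕ):ℝ)*(q/2) = q by push_cast; ring,
      show (2*θ2-2)*(q/2) = (θ2-1)*q by ring]
  have e5 : (θ1 * t ^ θ2) ^ p = θ1 ^ p * t ^ (θ2 * p) := by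
    rw [Real.mul_rpow hθ1.le hX.le, ← Real.rpow_mul ht.le]
  -- exponent comparison
  have e6 : t ^ (θ2*p + (θ2-1)*q) ≤ t ^ (θ2-2) :=
    Real.rpow_le_rpow_of_exponent_ge ht ht1
      (by nlinarith [mul_pos (lt_trans one_pos hθ2) hpq1])
  -- smallness of θ1
  have e7 : θ1 ^ (p+q) * Kq ≤ c * θ1 := by
    have hθ1' : θ1 ≤ (c/Kq) ^ (1/(p+q-1)) := le_trans hθ1' (min_le_right _ _)
    have h2 : θ1^(p+q-1) ≤ ((c/Kq)^(1/(p+q-1)))^(p+q-1) :=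
      Real.rpow_le_rpow hθ1.le hθ1' hpq1.le
    rw [← Real.rpow_mul (div_pos hcpos hKqpos).le, one_div,
      inv_mul_cancel₀ hpq1.ne', Real.rpow_one] at h2
    have hsplit : θ1 ^ (p+q) = θ1^(p+q-1) * θ1 := by
      rw [← Real.rpow_add_one hθ1.ne']; norm_num
    calc θ1 ^ (p+q) * Kq = θ1^(p+q-1) * Kq * θ1 := by rw [hsplit]; ring
    _ ≤ (c/Kq) * Kq * θ1 := by
        apply mul_le_mul_of_nonneg_right _ hθ1.le
        exact mul_le_mul_of_nonneg_right h2 hKqpos.le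
    _ = c * θ1 := by field_simp
  -- the nonlinear term bound
  have key : (θ1 * t ^ θ2) ^ p
      * (β ^ 2 * (θ1 * t ^ θ2) ^ 2 + θ1 ^ 2 * θ2 ^ 2 * t ^ (2 * θ2 - 2) * (1 - t ^ 2)) ^ (q / 2)
      ≤ c * θ1 * t ^ (θ2 - 2) := by
    calc (θ1 * t ^ θ2) ^ p
        * (β ^ 2 * (θ1 * t ^ θ2) ^ 2 + θ1 ^ 2 * θ2 ^ 2 * t ^ (2 * θ2 - 2) * (1 - t ^ 2)) ^ (q / 2)
        ≤ (θ1 ^ p * t ^ (θ2 * p)) * (θ1^q * t^((θ2-1)*q) * Kq) := by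
          rw [← e4, ← e5]
          exact mul_le_mul_of_nonneg_left hIq (Real.rpow_nonneg (by positivity) _)
      _ = (θ1 ^ (p+q) * Kq) * t ^ (θ2*p + (θ2-1)*q) := by
          rw [Real.rpow_add hθ1, Real.rpow_add ht]; ring
      _ ≤ (c * θ1) * t ^ (θ2-2) := by
          apply mul_le_mul e7 e6 (Real.rpow_pos_of_pos ht _).le
          positivity
      _ = c * θ1 * t ^ (θ2-2) := by ring
  have e2c : c*θ1*(t^(θ2-2)*t^2) = c*θ1*(t^θ2) := by rw [e2]
  have hprod1 : 0 ≤ θ1*(t^θ2)*((lam - ((N:ℝ)-1)*θ2) - c) :=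
    mul_nonneg (mul_pos hθ1 hX).le (by linarith)
  have hprod2 : 0 ≤ (θ1*(t^(θ2-2)*(1-t^2)))*((θ2*(θ2-1)) - c) :=
    mul_nonneg (mul_nonneg hθ1.le (mul_nonneg hY.le h1t)) (by linarith)
  have hD : θ1 * (θ2 * t ^ (θ2 - 1) * (-(((N : ℝ) - 1)) * t)
        + θ2 * (θ2 - 1) * t ^ (θ2 - 2) * (1 - t ^ 2))
      = -(θ1*θ2*((N:ℝ)-1)*(t^θ2)) + θ1*θ2*(θ2-1)*(t^(θ2-2))*(1-t^2) := by
    rw [← e1]; ring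
  rw [hD]
  linarith [key, e2c, hprod1, hprod2]
end
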